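/- Let T be a complex matrix with trace(T^n) ≠ 0 for some n ≥ 1. Then there exist arbitrarily large k with trace(T^k) ≠ 0; more precisely, for every l ≥ 1 there exists m with 1 ≤ m ≤ (size of T) such that trace(T^{nlm}) ≠ 0. -/

import Mathlib

/-!
On the generalised eigenspace of `μ` an endomorphism `f` is `μ` plus a nilpotent, so
`tr (f ^ k) = ∑ μ, dim E_μ • μ ^ k`. If these power sums vanish for `1 ≤ k ≤ dim V`, a Vandermonde
argument kills every nonzero `μ`, so `f` is nilpotent. Hence if `tr (T ^ (n l m)) = 0` for all
`1 ≤ m ≤ N`, then `T ^ (n l)`, and with it `T` and `T ^ n`, is nilpotent, so `tr (T ^ n) = 0`.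
-/

open Module Module.End LinearMap

theorem Finset.eq_zero_of_forall_sum_mul_pow_eq_zero {R : Type*} [CommRing R] [IsDomain R]
    {s : Finset R} {c : R → R} (hc : ∀ μ ∈ s, c μ ≠ 0)
    (h : ∀ m, 1 ≤ m → m ≤ s.card → ∑ μ ∈ s, c μ * μ ^ m = 0) : ∀ μ ∈ s, μ = 0 := by
  intro μ hμ
  set e := s.equivFin
  let v : Fin s.card → R := fun j => e.symm j
  have hv : Function.Injective v := Subtype.val_injective.comp e.symm.injective
  have hsum (i : Fin s.card) : ∑ j, c (v j) * v j * v j ^ (i : ℕ) = 0 := by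
    rw [← h (i + 1) (by omega) i.2, ← Finset.sum_coe_sort s, ← e.symm.sum_comp]
    exact Finset.sum_congr rfl fun j _ => by ring
  have hμ0 := congrFun (Matrix.eq_zero_of_forall_pow_sum_mul_pow_eq_zero hv hsum) (e ⟨μ, hμ⟩)
  simpa [v, hc μ hμ] using hμ0

namespace Module.End

variable {K V : Type*} [Field K] [AddCommGroup V] [Module K V] [FiniteDimensional K V]

theorem trace_pow_eq_of_isNilpotent_sub_algebraMap {g : End K V} {μ : K}
    (hg : IsNilpotent (g - algebraMap K (End K V) μ)) (k : ℕ) :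
    trace K V (g ^ k) = μ ^ k * finrank K V := by
  induction k with
  | zero => simp
  | succ k ih =>
    rw [pow_succ, mul_eq_comp,
      trace_comp_eq_mul_of_commute_of_isNilpotent μ ((Commute.refl g).pow_left k) hg, ih]
    ring

theorem finite_setOf_maxGenEigenspace_ne_bot (f : End K V) :
    {μ | f.maxGenEigenspace μ ≠ ⊥}.Finite :=
  WellFoundedGT.finite_ne_bot_of_iSupIndep f.independent_maxGenEigenspace

theorem card_toFinset_maxGenEigenspace_ne_bot_le_finrank (f : End K V) :
    f.finite_setOf_maxGenEigenspace_ne_bot.toFinset.card ≤ finrank K V := by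
  let hfin : Fintype {μ | f.maxGenEigenspace μ ≠ ⊥} :=
    f.finite_setOf_maxGenEigenspace_ne_bot.fintype
  let _ : Fintype {μ // f.maxGenEigenspace μ ≠ ⊥} := hfin
  rw [Set.Finite.card_toFinset]
  exact f.independent_maxGenEigenspace.subtype_ne_bot_le_finrank

theorem trace_pow_restrict_maxGenEigenspace (f : End K V) (μ : K) (k : ℕ) :
    trace K (f.maxGenEigenspace μ)
        ((f ^ k).restrict (mapsTo_maxGenEigenspace_of_comm ((Commute.refl f).pow_right k) μ)) =
      finrank K (f.maxGenEigenspace μ) * μ ^ k := by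
  rw [← pow_restrict k (mapsTo_maxGenEigenspace_of_comm rfl μ), mul_comm,
    trace_pow_eq_of_isNilpotent_sub_algebraMap
      (f.isNilpotent_restrict_maxGenEigenspace_sub_algebraMap μ)]

theorem trace_pow_eq_sum_finrank_maxGenEigenspace_mul [IsAlgClosed K] (f : End K V) (k : ℕ) :
    trace K V (f ^ k) = ∑ μ ∈ f.finite_setOf_maxGenEigenspace_ne_bot.toFinset,
      finrank K (f.maxGenEigenspace μ) * μ ^ k := by
  classical
  have hds := DirectSum.isInternal_submodule_of_iSupIndep_of_iSup_eq_top
    f.independent_maxGenEigenspace f.iSup_maxGenEigenspace_eq_top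
  rw [trace_eq_sum_trace_restrict' hds f.finite_setOf_maxGenEigenspace_ne_bot
    fun μ => mapsTo_maxGenEigenspace_of_comm ((Commute.refl f).pow_right k) μ]
  exact Finset.sum_congr rfl fun μ _ => f.trace_pow_restrict_maxGenEigenspace μ k

theorem isNilpotent_of_maxGenEigenspace_zero_eq_top {f : End K V}
    (hf : f.maxGenEigenspace 0 = ⊤) : IsNilpotent f :=
  ((charpoly_nilpotent_tfae f).out 2 0).mp fun x => by
    simpa using (f.mem_maxGenEigenspace 0 x).mp (hf ▸ Submodule.mem_top)

theorem isNilpotent_of_forall_trace_pow_eq_zero [CharZero K] [IsAlgClosed K] (f : End K V)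
    (h : ∀ m, 1 ≤ m → m ≤ finrank K V → trace K V (f ^ m) = 0) : IsNilpotent f := by
  set s := f.finite_setOf_maxGenEigenspace_ne_bot.toFinset
  have hs : ∀ μ ∈ s, μ = 0 := by
    refine Finset.eq_zero_of_forall_sum_mul_pow_eq_zero
      (c := fun μ => (finrank K (f.maxGenEigenspace μ) : K)) (fun μ hμ => ?_) fun m hm hms => ?_
    · rw [Set.Finite.mem_toFinset] at hμ
      exact Nat.cast_ne_zero.mpr (finrank_pos_iff.mpr (Submodule.nontrivial_iff_ne_bot.mpr hμ)).ne'
    · rw [← trace_pow_eq_sum_finrank_maxGenEigenspace_mul]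
      exact h m hm (hms.trans f.card_toFinset_maxGenEigenspace_ne_bot_le_finrank)
  refine isNilpotent_of_maxGenEigenspace_zero_eq_top (eq_top_iff.mpr ?_)
  rw [← f.iSup_maxGenEigenspace_eq_top]
  refine iSup_le fun μ => ?_
  by_cases hμ : f.maxGenEigenspace μ = ⊥
  · simp [hμ]
  · rw [hs μ (by simpa [s] using hμ)]

end Module.End

theorem Matrix.isNilpotent_of_forall_trace_pow_eq_zero {K ι : Type*} [Field K] [CharZero K]
    [IsAlgClosed K] [Fintype ι] [DecidableEq ι] (A : Matrix ι ι K)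
    (h : ∀ m, 1 ≤ m → m ≤ Fintype.card ι → (A ^ m).trace = 0) : IsNilpotent A := by
  have hA := Module.End.isNilpotent_of_forall_trace_pow_eq_zero (Matrix.toLinAlgEquiv' A)
    fun m hm hmN => by
      rw [← map_pow]
      exact (trace_toLin'_eq (A ^ m)).trans (h m hm (by simpa using hmN))
  simpa using hA.map Matrix.toLinAlgEquiv'.symm

theorem stmt_15 (N : ℕ) (T : Matrix (Fin N) (Fin N) ℂ)
    (n : ℕ) (hn : 1 ≤ n) (h : (T ^ n).trace ≠ 0) :
    (∀ K : ℕ, ∃ k, K ≤ k ∧ (T ^ k).trace ≠ 0) ∧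
    (∀ l : ℕ, 1 ≤ l → ∃ m, 1 ≤ m ∧ m ≤ N ∧ (T ^ (n * l * m)).trace ≠ 0) := by
  have periodic (l : ℕ) (hl : 1 ≤ l) : ∃ m, 1 ≤ m ∧ m ≤ N ∧ (T ^ (n * l * m)).trace ≠ 0 := by
    by_contra! hzero
    have hTnl : IsNilpotent (T ^ (n * l)) :=
      Matrix.isNilpotent_of_forall_trace_pow_eq_zero _ fun m hm hmN => by
        rw [← pow_mul]
        exact hzero m hm (by simpa using hmN)
    have hTn : IsNilpotent (T ^ n) := (hTnl.of_pow).pow_of_pos (by omega)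
    exact h (Matrix.isNilpotent_trace_of_isNilpotent hTn).eq_zero
  refine ⟨fun K => ?_, periodic⟩
  obtain ⟨m, hm, -, hK⟩ := periodic (K + 1) (by omega)
  have hle : 1 * (K + 1) * 1 ≤ n * (K + 1) * m := Nat.mul_le_mul (Nat.mul_le_mul hn le_rfl) hm
  exact ⟨n * (K + 1) * m, by omega, hK⟩
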